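/- arXiv:1110.5847 — 2 statements merged into one kernel-verified Lean document; each statement's English description precedes it below -/
import Mathlib

section
/- For every λ ≥ 0, the matrix Z* = U D_λ Uᵀ is a global minimizer over all real n×n matrices Z of the KLRR objective F(Z) = (1/2)‖Φ − ΦZ‖_F² + λ‖Z‖_*, where K = ΦᵀΦ = U D Uᵀ is the spectral decomposition of the Gram matrix and D_λ is the diagonal matrix with D_λ(i,i) = 1 − λ/σᵢ if σᵢ > λ and 0 otherwise (σᵢ the i-th eigenvalue of K). -/
open Matrix BigOperators Finset

/-- Frobenius norm of a real matrix. -/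
noncomputable def frobNorm {m n : Type*} [Fintype m] [Fintype n] (A : Matrix m n ℝ) : ℝ :=
  Real.sqrt (∑ i, ∑ j, (A i j) ^ 2)

/-- Nuclear norm of a real square matrix: the sum of its singular values,
i.e. of the square roots of the eigenvalues of `Aᴴ * A`. -/
noncomputable def nuclearNorm {n : Type*} [Fintype n] [DecidableEq n] (Z : Matrix n n ℝ) : ℝ :=
  ∑ i, Real.sqrt ((Matrix.isHermitian_conjTranspose_mul_self Z).eigenvalues i)

/-!
Write `W = Uᵀ Z U`. Because `ΦᵀΦ = U diag(σ) Uᵀ`, the data term `‖Φ - ΦZ‖_F²` equals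
`∑ᵢ σᵢ ∑ⱼ (1 - W)ᵢⱼ²` and so dominates `∑ᵢ σᵢ (1 - Wᵢᵢ)²`; the nuclear norm dominates `∑ᵢ |Wᵢᵢ|`
(expand `W` through the singular vectors of `Z` and apply Cauchy–Schwarz column by column). Hence
`F(Z) ≥ ∑ᵢ fᵢ(Wᵢᵢ)` with `fᵢ(t) = σᵢ(1 - t)²/2 + λ|t|`, with equality when `W` is diagonal.
`Z*` is the diagonal choice `Wᵢᵢ = argmin fᵢ`, which is the soft-thresholding formula.
-/

section

variable {m n p : Type*} [Fintype n] [Fintype p] [DecidableEq n]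

lemma frobNorm_sq_eq_trace [Fintype m] (B : Matrix m p ℝ) :
    frobNorm B ^ 2 = trace (Bᵀ * B) := by
  rw [frobNorm, Real.sq_sqrt (by positivity), Finset.sum_comm]
  simp [trace, Matrix.mul_apply, sq]

lemma trace_transpose_mul_diagonal_mul (W : Matrix n p ℝ) (σ : n → ℝ) :
    trace (Wᵀ * diagonal σ * W) = ∑ i, σ i * ∑ j, W i j ^ 2 := by
  simp only [trace, Matrix.diag, Matrix.mul_apply, transpose_apply, diagonal_apply, mul_ite,
    mul_zero, sum_ite_eq', mem_univ, if_true, Finset.mul_sum]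
  rw [Finset.sum_comm]
  exact sum_congr rfl fun i _ => sum_congr rfl fun j _ => by ring

lemma frobNorm_mul_conj_sq [Fintype m] {Φ : Matrix m n ℝ} {U : Matrix n n ℝ} {σ : n → ℝ}
    (hU : Uᵀ * U = 1) (hK : Φᵀ * Φ = U * diagonal σ * Uᵀ) (W : Matrix n n ℝ) :
    frobNorm (Φ * (U * W * Uᵀ)) ^ 2 = ∑ i, σ i * ∑ j, W i j ^ 2 := by
  have hconj : (Φ * (U * W * Uᵀ))ᵀ * (Φ * (U * W * Uᵀ)) = U * (Wᵀ * diagonal σ * W) * Uᵀ := by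
    simp only [transpose_mul, transpose_transpose, Matrix.mul_assoc]
    rw [← Matrix.mul_assoc Φᵀ, hK]
    simp only [Matrix.mul_assoc]
    rw [← Matrix.mul_assoc Uᵀ U, hU, Matrix.one_mul, ← Matrix.mul_assoc Uᵀ U, hU, Matrix.one_mul]
  rw [frobNorm_sq_eq_trace, hconj, trace_mul_cycle, hU, Matrix.one_mul,
    trace_transpose_mul_diagonal_mul]

lemma sub_mul_eq_mul_conj (Φ : Matrix m n ℝ) {U : Matrix n n ℝ} (hU : U * Uᵀ = 1)
    (Z : Matrix n n ℝ) : Φ - Φ * Z = Φ * (U * (1 - Uᵀ * Z * U) * Uᵀ) := by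
  simp only [Matrix.mul_sub, Matrix.sub_mul, Matrix.mul_one, hU, ← Matrix.mul_assoc,
    Matrix.one_mul]
  rw [Matrix.mul_assoc _ U Uᵀ, hU, Matrix.mul_one]

open Polynomial in
lemma Matrix.IsHermitian.sum_comp_eigenvalues_of_eq_conj_diagonal {A V : Matrix n n ℝ}
    (hA : A.IsHermitian) {c : n → ℝ} (hV : Vᵀ * V = 1) (h : A = V * diagonal c * Vᵀ)
    (f : ℝ → ℝ) : ∑ i, f (hA.eigenvalues i) = ∑ i, f (c i) := by
  have hchar : A.charpoly = ∏ i, (X - C (c i)) := by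
    rw [h, charpoly_mul_comm, ← Matrix.mul_assoc, hV, Matrix.one_mul, charpoly_diagonal]
  have hroots : univ.val.map hA.eigenvalues = univ.val.map c := by
    have h := hA.roots_charpoly_eq_eigenvalues
    rw [hchar, roots_prod _ _ (by simp [prod_ne_zero_iff, X_sub_C_ne_zero])] at h
    simpa using h.symm
  have hsum := congrArg (fun s => (s.map f).sum) hroots
  simp only [Multiset.map_map] at hsum
  exact hsum

lemma Matrix.IsHermitian.eq_conj_diagonal_eigenvalues {A : Matrix n n ℝ} (hA : A.IsHermitian) :
    A = (hA.eigenvectorUnitary : Matrix n n ℝ) * diagonal hA.eigenvalues *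
      (hA.eigenvectorUnitary : Matrix n n ℝ)ᵀ := by
  have h := hA.spectral_theorem
  rwa [RCLike.ofReal_real_eq_id, Function.id_comp, Unitary.conjStarAlgAut_apply] at h

lemma nuclearNorm_conj_diagonal {U : Matrix n n ℝ} (hU : Uᵀ * U = 1) (c : n → ℝ) :
    nuclearNorm (U * diagonal c * Uᵀ) = ∑ i, |c i| := by
  have hsq : (U * diagonal c * Uᵀ)ᴴ * (U * diagonal c * Uᵀ) = U * diagonal (c ^ 2) * Uᵀ := by
    simp only [conjTranspose_eq_transpose_of_trivial, transpose_mul, transpose_transpose,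
      diagonal_transpose, Matrix.mul_assoc]
    rw [← Matrix.mul_assoc Uᵀ U, hU, Matrix.one_mul, ← Matrix.mul_assoc (diagonal c),
      diagonal_mul_diagonal, sq]
    rfl
  unfold nuclearNorm
  rw [IsHermitian.sum_comp_eigenvalues_of_eq_conj_diagonal _ hU hsq]
  simp [Real.sqrt_sq_eq_abs]

lemma sum_abs_diag_mul_le {Y P : Matrix n n ℝ} {e : n → ℝ} (hY : Yᵀ * Y = diagonal e)
    (hP : P * Pᵀ = 1) : ∑ i, |(Y * P) i i| ≤ ∑ j, √(e j) := by
  have hcol (j : n) : ∑ i, Y i j ^ 2 = e j := by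
    simpa [Matrix.mul_apply, sq] using congrFun (congrFun hY j) j
  have hrow (j : n) : ∑ i, P j i ^ 2 = 1 := by
    simpa [Matrix.mul_apply, sq] using congrFun (congrFun hP j) j
  calc ∑ i, |(Y * P) i i| ≤ ∑ i, ∑ j, |Y i j| * |P j i| := by
        gcongr with i
        simpa only [Matrix.mul_apply, abs_mul] using
          abs_sum_le_sum_abs (fun j => Y i j * P j i) univ
    _ = ∑ j, ∑ i, |Y i j| * |P j i| := Finset.sum_comm
    _ ≤ ∑ j, √(∑ i, |Y i j| ^ 2) * √(∑ i, |P j i| ^ 2) := by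
        gcongr with j
        exact Real.sum_mul_le_sqrt_mul_sqrt _ _ _
    _ = ∑ j, √(e j) := by simp [sq_abs, hcol, hrow]

lemma sum_abs_diag_le_nuclearNorm {A B : Matrix n n ℝ} (hA : A * Aᵀ = 1) (hB : B * Bᵀ = 1)
    (Z : Matrix n n ℝ) : ∑ i, |(Aᵀ * Z * B) i i| ≤ nuclearNorm Z := by
  set hN := isHermitian_conjTranspose_mul_self Z
  set V : Matrix n n ℝ := (hN.eigenvectorUnitary : Matrix n n ℝ)
  have hV : V * Vᵀ = 1 := mem_unitaryGroup_iff.mp hN.eigenvectorUnitary.2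
  have hV' : Vᵀ * V = 1 := mem_unitaryGroup_iff'.mp hN.eigenvectorUnitary.2
  have hZZ : Zᵀ * Z = V * diagonal hN.eigenvalues * Vᵀ := hN.eq_conj_diagonal_eigenvalues
  have hY : (Aᵀ * Z * V)ᵀ * (Aᵀ * Z * V) = diagonal hN.eigenvalues := by
    simp only [transpose_mul, transpose_transpose, Matrix.mul_assoc]
    rw [← Matrix.mul_assoc A, hA, Matrix.one_mul, ← Matrix.mul_assoc Zᵀ, hZZ]
    simp only [Matrix.mul_assoc]
    rw [hV', ← Matrix.mul_assoc Vᵀ V, hV', Matrix.one_mul, Matrix.mul_one]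
  have hP : (Vᵀ * B) * (Vᵀ * B)ᵀ = 1 := by
    rw [transpose_mul, transpose_transpose, Matrix.mul_assoc, ← Matrix.mul_assoc B, hB,
      Matrix.one_mul, hV']
  have hYP : Aᵀ * Z * V * (Vᵀ * B) = Aᵀ * Z * B := by
    rw [← Matrix.mul_assoc, Matrix.mul_assoc _ V, hV, Matrix.mul_one]
  rw [← hYP]
  exact sum_abs_diag_mul_le hY hP

noncomputable def klrrObjective [Fintype m] (Φ : Matrix m n ℝ) (lam : ℝ) (Z : Matrix n n ℝ) : ℝ :=
  1 / 2 * frobNorm (Φ - Φ * Z) ^ 2 + lam * nuclearNorm Z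

section Objective

variable [Fintype m] {Φ : Matrix m n ℝ} {U : Matrix n n ℝ} {σ : n → ℝ}

lemma klrrObjective_conj_diagonal (hU : U * Uᵀ = 1) (hU' : Uᵀ * U = 1)
    (hK : Φᵀ * Φ = U * diagonal σ * Uᵀ) (lam : ℝ) (c : n → ℝ) :
    klrrObjective Φ lam (U * diagonal c * Uᵀ) =
      ∑ i, (1 / 2 * σ i * (1 - c i) ^ 2 + lam * |c i|) := by
  have hW : Uᵀ * (U * diagonal c * Uᵀ) * U = diagonal c := by
    simp only [← Matrix.mul_assoc]
    rw [hU', Matrix.one_mul, Matrix.mul_assoc, hU', Matrix.mul_one]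
  have hrow (i : n) : ∑ j, (1 - diagonal c) i j ^ 2 = (1 - c i) ^ 2 := by
    rw [sum_eq_single i (fun j _ hj => by simp [one_apply_ne' hj, diagonal_apply_ne' _ hj])
      (by simp)]
    simp
  rw [klrrObjective, sub_mul_eq_mul_conj Φ hU, hW, frobNorm_mul_conj_sq hU' hK,
    nuclearNorm_conj_diagonal hU', mul_sum, mul_sum, ← sum_add_distrib]
  simp only [hrow, mul_assoc]

lemma sum_le_klrrObjective {lam : ℝ} (hlam : 0 ≤ lam) (hσ : ∀ i, 0 ≤ σ i) (hU : U * Uᵀ = 1)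
    (hU' : Uᵀ * U = 1) (hK : Φᵀ * Φ = U * diagonal σ * Uᵀ) (Z : Matrix n n ℝ) :
    ∑ i, (1 / 2 * σ i * (1 - (Uᵀ * Z * U) i i) ^ 2 + lam * |(Uᵀ * Z * U) i i|)
      ≤ klrrObjective Φ lam Z := by
  have hfrob : ∑ i, σ i * (1 - (Uᵀ * Z * U) i i) ^ 2 ≤ frobNorm (Φ - Φ * Z) ^ 2 := by
    rw [sub_mul_eq_mul_conj Φ hU, frobNorm_mul_conj_sq hU' hK]
    gcongr with i
    · exact hσ i
    · simpa using single_le_sum (f := fun j => (1 - Uᵀ * Z * U) i j ^ 2)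
        (fun j _ => sq_nonneg _) (mem_univ i)
  have hnuc : ∑ i, |(Uᵀ * Z * U) i i| ≤ nuclearNorm Z := sum_abs_diag_le_nuclearNorm hU hU Z
  set W := Uᵀ * Z * U
  calc ∑ i, (1 / 2 * σ i * (1 - W i i) ^ 2 + lam * |W i i|)
      = 1 / 2 * ∑ i, σ i * (1 - W i i) ^ 2 + lam * ∑ i, |W i i| := by
        rw [sum_add_distrib, mul_sum, mul_sum]
        simp only [mul_assoc]
    _ ≤ klrrObjective Φ lam Z := by unfold klrrObjective; gcongr

end Objective

noncomputable def klrrShrink (lam s : ℝ) : ℝ := if lam < s then 1 - lam / s else 0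

lemma klrrShrink_isMinOn {lam s : ℝ} (hlam : 0 ≤ lam) (hs : 0 ≤ s) :
    IsMinOn (fun t => 1 / 2 * s * (1 - t) ^ 2 + lam * |t|) Set.univ (klrrShrink lam s) := by
  refine isMinOn_univ_iff.mpr fun t => ?_
  unfold klrrShrink
  split_ifs with h
  · have hs0 : 0 < s := hlam.trans_lt h
    have hpos : 0 ≤ 1 - lam / s := by rw [sub_nonneg, div_le_one hs0]; exact h.le
    rw [abs_of_nonneg hpos]
    -- `s(1 - t)²/2 + λt` is `s(t - (1 - λ/s))²/2` up to a constant, and `λt ≤ λ|t|`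
    have hdiv : s * (lam / s) = lam := by field_simp
    nlinarith [sq_nonneg (s * (1 - t) - lam), mul_le_mul_of_nonneg_left (le_abs_self t) hlam]
  · push Not at h
    -- the excess over `t = 0` is `st²/2 - st + λ|t| ≥ (λ - s)|t| ≥ 0`
    nlinarith [mul_nonneg hs (sq_nonneg t), mul_le_mul_of_nonneg_left (le_abs_self t) hs,
      mul_le_mul_of_nonneg_right h (abs_nonneg t)]

end

/-- For every λ ≥ 0, the matrix `Z* = U D_λ Uᵀ` is a global minimizer of the
KLRR objective `F(Z) = (1/2)‖Φ − ΦZ‖_F² + λ‖Z‖_*`, where `K = ΦᵀΦ = U D Uᵀ` is the spectral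
decomposition of the Gram matrix and `D_λ(i,i) = 1 − λ/σᵢ` if `σᵢ > λ`, `0` otherwise. -/
theorem klrr_closed_form_solution {d n : ℕ}
    (Φ : Matrix (Fin d) (Fin n) ℝ) (lam : ℝ) (hlam : 0 ≤ lam)
    (U : Matrix (Fin n) (Fin n) ℝ) (σ : Fin n → ℝ)
    (hU : U * Uᵀ = 1) (hU' : Uᵀ * U = 1) (hσ : ∀ i, 0 ≤ σ i)
    (hK : Φᵀ * Φ = U * Matrix.diagonal σ * Uᵀ)
    (Zstar : Matrix (Fin n) (Fin n) ℝ)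
    (hZstar : Zstar =
      U * Matrix.diagonal (fun i => if lam < σ i then 1 - lam / σ i else 0) * Uᵀ) :
    ∀ Z : Matrix (Fin n) (Fin n) ℝ,
      (1 / 2) * (frobNorm (Φ - Φ * Zstar)) ^ 2 + lam * nuclearNorm Zstar
        ≤ (1 / 2) * (frobNorm (Φ - Φ * Z)) ^ 2 + lam * nuclearNorm Z := by
  intro Z
  change klrrObjective Φ lam Zstar ≤ klrrObjective Φ lam Z
  calc klrrObjective Φ lam Zstar
      = ∑ i, (1 / 2 * σ i * (1 - klrrShrink lam (σ i)) ^ 2 + lam * |klrrShrink lam (σ i)|) := by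
        rw [hZstar]; exact klrrObjective_conj_diagonal hU hU' hK lam _
    _ ≤ ∑ i, (1 / 2 * σ i * (1 - (Uᵀ * Z * U) i i) ^ 2 + lam * |(Uᵀ * Z * U) i i|) :=
        sum_le_sum fun i _ => klrrShrink_isMinOn hlam (hσ i) (Set.mem_univ _)
    _ ≤ klrrObjective Φ lam Z := sum_le_klrrObjective hlam hσ hU hU' hK Z
end

section
/- Let Φ = [Φ₁ Φ₂] be a real d×n matrix partitioned into column blocks of sizes n₁ and n₂ whose column spans intersect only in {0}. Let P be the matrix of the orthogonal projection of ℝⁿ onto the orthogonal complement of ker(Φ) (equivalently, onto the row space of Φ). Then P is block diagonal with respect to the partition: P_{ij} = 0 whenever i ≤ n₁ < j or j ≤ n₁ < i. -/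
/-!
Let `D = diag(1, …, 1, 0, …, 0)` be the coordinate projection onto the first block. Since the
column spans of `Φ₁` and `Φ₂` meet only in `0`, `Φ₁ x₁ + Φ₂ x₂ = 0` forces `Φ₁ x₁ = 0`, so
`ker Φ` is `D`-invariant. As `D` is symmetric, `(ker Φ)ᗮ` is `D`-invariant too, and an orthogonal
projection commutes with a symmetric operator preserving its range. Comparing entries of
`P D = D P` gives `P a b * D b b = D a a * P a b`, which kills the off-diagonal blocks.
-/

open Matrix Module.End

namespace Submodule

variable {𝕜 E : Type*} [RCLike 𝕜] [NormedAddCommGroup E] [InnerProductSpace 𝕜 E]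

theorem commute_starProjection_of_isSymmetric {K : Submodule 𝕜 E} [K.HasOrthogonalProjection]
    {T : Module.End 𝕜 E} (hT : T.IsSymmetric) (hK : K ∈ T.invtSubmodule) :
    Commute (K.starProjection : E →ₗ[𝕜] E) T :=
  (LinearMap.IsIdempotentElem.commute_iff
    (ContinuousLinearMap.IsIdempotentElem.toLinearMap K.isIdempotentElem_starProjection)).2
    ⟨by simpa using hK, by simpa using hT.orthogonalComplement_mem_invtSubmodule hK⟩

end Submodule

namespace Matrix

section Blocks

variable {R m ι κ : Type*} [CommRing R] [Fintype ι] [Fintype κ]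

theorem toCols₁_mulVec_eq_zero_of_mulVec_eq_zero {Φ : Matrix m (ι ⊕ κ) R}
    (hind : LinearMap.range Φ.toCols₁.mulVecLin ⊓ LinearMap.range Φ.toCols₂.mulVecLin = ⊥)
    {x : ι ⊕ κ → R} (hx : Φ *ᵥ x = 0) : Φ.toCols₁ *ᵥ (x ∘ Sum.inl) = 0 := by
  rw [← fromCols_toCols Φ, fromCols_mulVec, add_eq_zero_iff_eq_neg, ← mulVec_neg] at hx
  rw [← Submodule.mem_bot R, ← hind]
  exact ⟨⟨_, rfl⟩, ⟨_, hx.symm⟩⟩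

variable [DecidableEq ι] [DecidableEq κ]

theorem mulVec_diagonal_sumElim_mulVec_eq_zero {Φ : Matrix m (ι ⊕ κ) R}
    (hind : LinearMap.range Φ.toCols₁.mulVecLin ⊓ LinearMap.range Φ.toCols₂.mulVecLin = ⊥)
    {x : ι ⊕ κ → R} (hx : Φ *ᵥ x = 0) : Φ *ᵥ (diagonal (Sum.elim 1 0) *ᵥ x) = 0 := by
  have : diagonal (Sum.elim 1 0) *ᵥ x = Sum.elim (x ∘ Sum.inl) 0 := by
    ext (i | j) <;> simp [mulVec_diagonal]
  rw [this, ← fromCols_toCols Φ, fromCols_mulVec_sumElim, mulVec_zero, add_zero]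
  exact toCols₁_mulVec_eq_zero_of_mulVec_eq_zero hind hx

end Blocks

variable {𝕜 : Type*} [RCLike 𝕜]

theorem ker_toEuclideanLin_mem_invtSubmodule_diagonal {m ι κ : Type*} [Fintype ι] [Fintype κ]
    [DecidableEq ι] [DecidableEq κ] {Φ : Matrix m (ι ⊕ κ) 𝕜}
    (hind : LinearMap.range Φ.toCols₁.mulVecLin ⊓ LinearMap.range Φ.toCols₂.mulVecLin = ⊥) :
    LinearMap.ker Φ.toEuclideanLin ∈
      invtSubmodule (diagonal (Sum.elim 1 0) : Matrix (ι ⊕ κ) (ι ⊕ κ) 𝕜).toEuclideanLin := by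
  intro x hx
  simp only [Submodule.mem_comap, LinearMap.mem_ker, toLpLin_apply, WithLp.toLp_eq_zero] at hx ⊢
  exact mulVec_diagonal_sumElim_mulVec_eq_zero hind hx

theorem commute_of_toEuclideanLin_eq_starProjection {n : Type*} [Fintype n] [DecidableEq n]
    {P D : Matrix n n 𝕜} {K : Submodule 𝕜 (EuclideanSpace 𝕜 n)} [K.HasOrthogonalProjection]
    (hP : P.toEuclideanLin = K.starProjection) (hD : D.IsHermitian)
    (hK : K ∈ invtSubmodule D.toEuclideanLin) : Commute P D := by
  have h := Submodule.commute_starProjection_of_isSymmetric (isSymmetric_toEuclideanLin_iff.2 hD) hK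
  rw [← hP] at h
  simpa using h.map (toLpLinAlgEquiv 2).symm

end Matrix

/-- For `Φ = [Φ₁ Φ₂]` with column spans intersecting only in `{0}`, the matrix
`P` of the orthogonal projection of `ℝⁿ` onto the orthogonal complement of `ker Φ` (the row
space of `Φ`) is block diagonal with respect to the column partition. -/
theorem rowspace_projection_block_diagonal {d n₁ n₂ : ℕ}
    (Φ : Matrix (Fin d) (Fin n₁ ⊕ Fin n₂) ℝ)
    (hind : LinearMap.range (Φ.submatrix id Sum.inl).mulVecLin ⊓
        LinearMap.range (Φ.submatrix id Sum.inr).mulVecLin = ⊥)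
    (P : Matrix (Fin n₁ ⊕ Fin n₂) (Fin n₁ ⊕ Fin n₂) ℝ)
    (hP : P.toEuclideanLin =
      (LinearMap.ker Φ.toEuclideanLin)ᗮ.subtype ∘ₗ
        (Submodule.orthogonalProjection (LinearMap.ker Φ.toEuclideanLin)ᗮ).toLinearMap) :
    ∀ (i : Fin n₁) (j : Fin n₂),
      P (Sum.inl i) (Sum.inr j) = 0 ∧ P (Sum.inr j) (Sum.inl i) = 0 := by
  set D : Matrix (Fin n₁ ⊕ Fin n₂) (Fin n₁ ⊕ Fin n₂) ℝ := diagonal (Sum.elim 1 0)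
  have hD : D.IsHermitian := isHermitian_diagonal_of_self_adjoint _ (by ext (i | j) <;> simp)
  have hK := ker_toEuclideanLin_mem_invtSubmodule_diagonal hind
  have hcomm : Commute P D := commute_of_toEuclideanLin_eq_starProjection hP hD
    ((isSymmetric_toEuclideanLin_iff.2 hD).orthogonalComplement_mem_invtSubmodule hK)
  intro i j
  have h₁₂ := congr_fun₂ hcomm.eq (Sum.inl i) (Sum.inr j)
  have h₂₁ := congr_fun₂ hcomm.eq (Sum.inr j) (Sum.inl i)
  simp only [D, mul_diagonal, diagonal_mul, Sum.elim_inl, Sum.elim_inr, Pi.one_apply,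
    Pi.zero_apply, mul_zero, mul_one, zero_mul, one_mul] at h₁₂ h₂₁
  exact ⟨h₁₂.symm, h₂₁⟩
end
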